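/- Let n ≥ 1 and r > 0. For g = (x',u',ξ') ∈ ℍⁿ = ℝⁿ × ℝⁿ × ℝ define the action g·(z,w,ζ) = (x'+z, u'+w, ξ'+ζ+(1/2)(u'·z − x'·w)) on ℂⁿ × ℂⁿ × ℂ, and for σ in the unitary group U(n), writing σ = a + ib with real n×n matrices a, b, define σ·(z,w,ζ) = (az − bw, aw + bz, ζ). Then the domain Ω_r is invariant under both actions: if (z,w,ζ) ∈ Ω_r then g·(z,w,ζ) ∈ Ω_r for every g ∈ ℍⁿ and σ·(z,w,ζ) ∈ Ω_r for every σ ∈ U(n). -/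

import Mathlib

/-!
A real Heisenberg translation leaves `Im z` and `Im w` unchanged, and the real part it adds to
`Im ζ` is exactly the change of the symplectic term `Re w · Im z − Im w · Re z`.

For the unitary action, pack the imaginary parts into `M = Im z + i Im w ∈ ℂⁿ` and the real parts
into `P = Re z + i Re w`. Since `a` and `b` are real, `σ = a + ib` acts on `(z, w)` exactly as
`M ↦ σ M`, `P ↦ σ P`. The defining inequality of `Ω_r` involves only `‖M‖² = Re ⟨M, M⟩` and
`Re w · Im z − Im w · Re z = Im ⟨M, P⟩`, both of which a unitary `σ` preserves.
-/

open Complex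

/-- Membership in the domain
`Ω_r = {(z,w,ζ) : (|Im z|² + |Im w|²)² + 16(Im ζ − (1/2)(Re w · Im z − Im w · Re z))² < r⁴}`. -/
def inOmega (n : ℕ) (r : ℝ) (z w : Fin n → ℂ) (ζ : ℂ) : Prop :=
  ((∑ j, (z j).im ^ 2) + ∑ j, (w j).im ^ 2) ^ 2 +
      16 * (ζ.im - (1 / 2) * ((∑ j, (w j).re * (z j).im) - ∑ j, (w j).im * (z j).re)) ^ 2
    < r ^ 4

open Matrix

section
variable {ι : Type*} [Fintype ι]

-- With `f = Im` and `f = Re` these are the vectors `M` and `P` above.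
noncomputable def pairVec (f : ℂ →ₗ[ℝ] ℝ) (z w : ι → ℂ) : ι → ℂ := fun k => ⟨f (z k), f (w k)⟩

def reMatrix (σ : Matrix ι ι ℂ) : Matrix ι ι ℂ := of fun i j => ((σ i j).re : ℂ)

def imMatrix (σ : Matrix ι ι ℂ) : Matrix ι ι ℂ := of fun i j => ((σ i j).im : ℂ)

lemma map_ofReal_mul (f : ℂ →ₗ[ℝ] ℝ) (a : ℝ) (c : ℂ) : f (a * c) = a * f c := by
  rw [← real_smul, map_smul, smul_eq_mul]

lemma mulVec_pairVec (f : ℂ →ₗ[ℝ] ℝ) (σ : Matrix ι ι ℂ) (z w : ι → ℂ) :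
    σ *ᵥ pairVec f z w =
      pairVec f (reMatrix σ *ᵥ z - imMatrix σ *ᵥ w) (reMatrix σ *ᵥ w + imMatrix σ *ᵥ z) := by
  ext j : 1
  apply Complex.ext <;> simp [pairVec, reMatrix, imMatrix, mulVec, dotProduct, map_sum,
    map_ofReal_mul, re_sum, im_sum, Finset.sum_add_distrib, Finset.sum_sub_distrib]

lemma star_mulVec_dotProduct_mulVec [DecidableEq ι] {σ : Matrix ι ι ℂ}
    (hσ : σ ∈ unitaryGroup ι ℂ) (x y : ι → ℂ) :
    star (σ *ᵥ x) ⬝ᵥ (σ *ᵥ y) = star x ⬝ᵥ y := by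
  rw [star_mulVec, ← dotProduct_mulVec, mulVec_mulVec, ← star_eq_conjTranspose,
    Unitary.star_mul_self_of_mem hσ, one_mulVec]

end

lemma inOmega_iff_pairVec (n : ℕ) (r : ℝ) (z w : Fin n → ℂ) (ζ : ℂ) :
    inOmega n r z w ζ ↔
      (star (pairVec imLm z w) ⬝ᵥ pairVec imLm z w).re ^ 2 +
        16 * (ζ.im - 1 / 2 * (star (pairVec imLm z w) ⬝ᵥ pairVec reLm z w).im) ^ 2 < r ^ 4 := by
  have hnorm : (star (pairVec imLm z w) ⬝ᵥ pairVec imLm z w).re =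
      (∑ j, (z j).im ^ 2) + ∑ j, (w j).im ^ 2 := by
    simp [pairVec, dotProduct, re_sum, Finset.sum_add_distrib, sq]
  have hsympl : (star (pairVec imLm z w) ⬝ᵥ pairVec reLm z w).im =
      (∑ j, (w j).re * (z j).im) - ∑ j, (w j).im * (z j).re := by
    simp only [pairVec, dotProduct, im_sum, ← Finset.sum_sub_distrib]
    refine Finset.sum_congr rfl fun j _ => ?_
    simp [pairVec]
    ring
  rw [inOmega, hnorm, hsympl]

lemma inOmega_heisenberg_translate {n : ℕ} {r : ℝ} {z w : Fin n → ℂ} {ζ : ℂ}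
    (h : inOmega n r z w ζ) (x u : Fin n → ℝ) (ξ : ℝ) :
    inOmega n r (fun j => (x j : ℂ) + z j) (fun j => (u j : ℂ) + w j)
        ((ξ : ℂ) + ζ + (1 / 2) * ((∑ j, (u j : ℂ) * z j) - ∑ j, (x j : ℂ) * w j)) := by
  have him (v : Fin n → ℝ) (c : Fin n → ℂ) :
      ∑ j, ((v j : ℂ) + c j).im ^ 2 = ∑ j, (c j).im ^ 2 := by
    simp
  have hsympl : ((ξ : ℂ) + ζ + (1 / 2) * ((∑ j, (u j : ℂ) * z j) - ∑ j, (x j : ℂ) * w j)).im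
      - (1 / 2) * ((∑ j, ((u j : ℂ) + w j).re * ((x j : ℂ) + z j).im)
          - ∑ j, ((u j : ℂ) + w j).im * ((x j : ℂ) + z j).re)
      = ζ.im - (1 / 2) * ((∑ j, (w j).re * (z j).im) - ∑ j, (w j).im * (z j).re) := by
    simp [im_sum, Finset.sum_add_distrib, mul_add, mul_comm]
    ring
  rwa [inOmega, him, him, hsympl]

lemma inOmega_unitary_action {n : ℕ} {r : ℝ} {z w : Fin n → ℂ} {ζ : ℂ}
    (h : inOmega n r z w ζ) {σ : Matrix (Fin n) (Fin n) ℂ} (hσ : σ ∈ unitaryGroup (Fin n) ℂ) :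
    inOmega n r (reMatrix σ *ᵥ z - imMatrix σ *ᵥ w) (reMatrix σ *ᵥ w + imMatrix σ *ᵥ z) ζ := by
  rw [inOmega_iff_pairVec] at h ⊢
  rwa [← mulVec_pairVec, ← mulVec_pairVec, star_mulVec_dotProduct_mulVec hσ,
    star_mulVec_dotProduct_mulVec hσ]

theorem stmt_7_general (n : ℕ) (r : ℝ) :
    (∀ (x' u' : Fin n → ℝ) (ξ' : ℝ) (z w : Fin n → ℂ) (ζ : ℂ),
      inOmega n r z w ζ →
      inOmega n r (fun j => (x' j : ℂ) + z j) (fun j => (u' j : ℂ) + w j)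
        ((ξ' : ℂ) + ζ +
          (1 / 2) * ((∑ j, (u' j : ℂ) * z j) - ∑ j, (x' j : ℂ) * w j))) ∧
    ∀ σ : Matrix (Fin n) (Fin n) ℂ, σ ∈ Matrix.unitaryGroup (Fin n) ℂ →
      ∀ (z w : Fin n → ℂ) (ζ : ℂ), inOmega n r z w ζ →
      inOmega n r
        ((Matrix.of fun i j => ((σ i j).re : ℂ)).mulVec z -
          (Matrix.of fun i j => ((σ i j).im : ℂ)).mulVec w)
        ((Matrix.of fun i j => ((σ i j).re : ℂ)).mulVec w +
          (Matrix.of fun i j => ((σ i j).im : ℂ)).mulVec z) ζ :=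
  ⟨fun x' u' ξ' _ _ _ h => inOmega_heisenberg_translate h x' u' ξ',
    fun _ hσ _ _ _ h => inOmega_unitary_action h hσ⟩

/-- `Ω_r` is invariant under the Heisenberg translations and the `U(n)` action. -/
theorem stmt_7 (n : ℕ) (hn : 1 ≤ n) (r : ℝ) (hr : 0 < r) :
    (∀ (x' u' : Fin n → ℝ) (ξ' : ℝ) (z w : Fin n → ℂ) (ζ : ℂ),
      inOmega n r z w ζ →
      inOmega n r (fun j => (x' j : ℂ) + z j) (fun j => (u' j : ℂ) + w j)
        ((ξ' : ℂ) + ζ +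
          (1 / 2) * ((∑ j, (u' j : ℂ) * z j) - ∑ j, (x' j : ℂ) * w j))) ∧
    ∀ σ : Matrix (Fin n) (Fin n) ℂ, σ ∈ Matrix.unitaryGroup (Fin n) ℂ →
      ∀ (z w : Fin n → ℂ) (ζ : ℂ), inOmega n r z w ζ →
      inOmega n r
        ((Matrix.of fun i j => ((σ i j).re : ℂ)).mulVec z -
          (Matrix.of fun i j => ((σ i j).im : ℂ)).mulVec w)
        ((Matrix.of fun i j => ((σ i j).re : ℂ)).mulVec w +
          (Matrix.of fun i j => ((σ i j).im : ℂ)).mulVec z) ζ :=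
  stmt_7_general n r
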